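/- The four-square x² := x₀² + q⁻¹x₋x₊ + q x₊x₋ − x₃² lies in the center of the quantum Minkowski algebra 𝒳; that is, x² commutes with each of the generators x₀, x₋, x₊, x₃. -/
import Mathlib


noncomputable section

namespace QMink

open Matrix

/-- Free algebra on the four generators `x₀, x₋, x₊, x₃` (indices `0,1,2,3`). -/
abbrev F := FreeAlgebra ℂ (Fin 4)

/-- The generators of the free algebra. -/
def g (i : Fin 4) : F := FreeAlgebra.ι ℂ i

/-- The defining relations of quantum Minkowski space (index convention:
`0 ↦ x₀`, `1 ↦ x₋`, `2 ↦ x₊`, `3 ↦ x₃`). -/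
inductive Rel (q : ℝ) : F → F → Prop
  | r10 : Rel q (g 1 * g 0) (g 0 * g 1)
  | r20 : Rel q (g 2 * g 0) (g 0 * g 2)
  | r30 : Rel q (g 3 * g 0) (g 0 * g 3)
  | r13 : Rel q ((q : ℂ)⁻¹ • (g 1 * g 3) - (q : ℂ) • (g 3 * g 1))
      (-((((q : ℂ) - (q : ℂ)⁻¹)) • (g 1 * g 0)))
  | r32 : Rel q ((q : ℂ)⁻¹ • (g 3 * g 2) - (q : ℂ) • (g 2 * g 3))
      (-((((q : ℂ) - (q : ℂ)⁻¹)) • (g 2 * g 0)))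
  | rmp : Rel q (g 1 * g 2 - g 2 * g 1 - (((q : ℂ) - (q : ℂ)⁻¹)) • (g 3 * g 3))
      (-((((q : ℂ) - (q : ℂ)⁻¹)) • (g 3 * g 0)))

/-- Quantum Minkowski space. -/
abbrev X (q : ℝ) := RingQuot (Rel q)

/-- The generators `x₀, x₋, x₊, x₃` of quantum Minkowski space. -/
def x (q : ℝ) (i : Fin 4) : X q := RingQuot.mkAlgHom ℂ (Rel q) (g i)

/-- `λ = q - q⁻¹`. -/
def lam (q : ℝ) : ℂ := (q : ℂ) - (q : ℂ)⁻¹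

/-- The symmetric quantum number `[n] = (qⁿ - q⁻ⁿ)/(q - q⁻¹)`. -/
def qnum (q : ℝ) (n : ℕ) : ℂ := ((q : ℂ) ^ n - ((q : ℂ)⁻¹) ^ n) / ((q : ℂ) - (q : ℂ)⁻¹)

/-- The standard quantum number `⟦n⟧ = (q^{2n} - 1)/(q² - 1)`. -/
def qbr (q : ℝ) (n : ℕ) : ℂ := ((q : ℂ) ^ (2 * n) - 1) / ((q : ℂ) ^ 2 - 1)

/-- The `q`-factorial `⟦n⟧!`. -/
def qfact (q : ℝ) : ℕ → ℂ
  | 0 => 1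
  | n + 1 => qbr q (n + 1) * qfact q n

/-- The light cone coordinate `x_{3∖0} = x₃ - x₀`. -/
def x30 (q : ℝ) : X q := x q 3 - x q 0

/-- The four-square `x² = x₀² + q⁻¹ x₋x₊ + q x₊x₋ - x₃²`. -/
def xsq (q : ℝ) : X q :=
  x q 0 * x q 0 + (q : ℂ)⁻¹ • (x q 1 * x q 2) + (q : ℂ) • (x q 2 * x q 1) - x q 3 * x q 3

/-- `[2]^{1/2}` as a complex number. -/
def rs2 (q : ℝ) : ℂ := (Real.sqrt (q + q⁻¹) : ℂ)

/-- `q^{1/2}` as a complex number. -/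
def rsq (q : ℝ) : ℂ := (Real.sqrt q : ℂ)

/-- The coefficient `[4]/[2]²`. -/
def c0 (q : ℝ) : ℂ := qnum q 4 / (qnum q 2) ^ 2

/-- The coefficient `q^{-1/2} λ [2]^{-1/2}`. -/
def cB (q : ℝ) : ℂ := (rsq q)⁻¹ * lam q * (rs2 q)⁻¹

/-- The coefficient `q^{1/2} λ [2]^{-1/2}`. -/
def cB' (q : ℝ) : ℂ := rsq q * lam q * (rs2 q)⁻¹

/-- The coefficient `q^{-1/2} λ [2]^{1/2}`. -/
def cL (q : ℝ) : ℂ := (rsq q)⁻¹ * lam q * rs2 q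

/-- The matrix `B₀`. -/
def B0 (q : ℝ) : Matrix (Fin 2) (Fin 2) (X q) :=
  !![c0 q • x q 0 + (lam q / ((q : ℂ) * qnum q 2)) • x q 3, cB q • x q 2;
     -(cB' q • x q 1), c0 q • x q 0 - ((q : ℂ) * lam q / qnum q 2) • x q 3]

/-- The matrix `B₋`. -/
def Bm (q : ℝ) : Matrix (Fin 2) (Fin 2) (X q) :=
  !![x q 1, cB q • x30 q; 0, x q 1]

/-- The matrix `B₊`. -/
def Bp (q : ℝ) : Matrix (Fin 2) (Fin 2) (X q) :=
  !![x q 2, 0; -(cB' q • x30 q), x q 2]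

/-- The matrix `B_{3∖0}`. -/
def B30 (q : ℝ) : Matrix (Fin 2) (Fin 2) (X q) :=
  !![(q : ℂ)⁻¹ • x30 q, 0; 0, (q : ℂ) • x30 q]

/-- The matrix `B₃ = B_{3∖0} + B₀`. -/
def B3 (q : ℝ) : Matrix (Fin 2) (Fin 2) (X q) := B30 q + B0 q

/-- The block matrix `L₀`. -/
def L0 (q : ℝ) : Matrix (Fin 2 ⊕ Fin 2) (Fin 2 ⊕ Fin 2) (X q) :=
  Matrix.fromBlocks (B0 q) 0 0 (B0 q)

/-- The block matrix `L₋`. -/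
def Lm (q : ℝ) : Matrix (Fin 2 ⊕ Fin 2) (Fin 2 ⊕ Fin 2) (X q) :=
  Matrix.fromBlocks ((q : ℂ) • Bm q) (cL q • B3 q) 0 ((q : ℂ)⁻¹ • Bm q)

/-- The block matrix `L₊`. -/
def Lp (q : ℝ) : Matrix (Fin 2 ⊕ Fin 2) (Fin 2 ⊕ Fin 2) (X q) :=
  Matrix.fromBlocks ((q : ℂ)⁻¹ • Bp q) 0 0 ((q : ℂ) • Bp q)

/-- The block matrix `L_{3∖0}`. -/
def L30 (q : ℝ) : Matrix (Fin 2 ⊕ Fin 2) (Fin 2 ⊕ Fin 2) (X q) :=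
  Matrix.fromBlocks (B30 q) (cL q • Bp q) 0 (B30 q)

/-- The complex change-of-basis matrix `M` from vector to spinor coordinates. -/
def Mmat (q : ℝ) : Matrix (Fin 4) (Fin 4) ℂ :=
  !![0, rs2 q, 0, 0;
     -(rsq q), 0, 0, rsq q;
     (q : ℂ) * rsq q, 0, 0, (rsq q)⁻¹;
     0, 0, rs2 q, 0]

/-- Reindex the spinor-index `4×4` matrices by `Fin 4`. -/
def toFin4 (q : ℝ) (A : Matrix (Fin 2 ⊕ Fin 2) (Fin 2 ⊕ Fin 2) (X q)) :
    Matrix (Fin 4) (Fin 4) (X q) :=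
  Matrix.reindex finSumFinEquiv finSumFinEquiv A

/-- Conjugation `M⁻¹ A M` transporting an `L`-matrix into the vector basis. -/
def conjM (q : ℝ) (A : Matrix (Fin 2 ⊕ Fin 2) (Fin 2 ⊕ Fin 2) (X q)) :
    Matrix (Fin 4) (Fin 4) (X q) :=
  ((Mmat q)⁻¹).map (algebraMap ℂ (X q)) * toFin4 q A * (Mmat q).map (algebraMap ℂ (X q))

/-- The vector-basis `L`-matrices `L_{x₀}, L_{x₋}, L_{x₊}, L_{x₃}`. -/
def Lx (q : ℝ) : Fin 4 → Matrix (Fin 4) (Fin 4) (X q) := fun i =>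
  match i with
  | 0 => conjM q (L0 q)
  | 1 => conjM q (Lm q)
  | 2 => conjM q (Lp q)
  | 3 => conjM q (L30 q + L0 q)

/-- The defining property of the partial derivatives `∂⁰, ∂⁻, ∂⁺, ∂³`
(index convention `0 ↦ ∂⁰`, `1 ↦ ∂⁻`, `2 ↦ ∂⁺`, `3 ↦ ∂³`). -/
def IsDeriv (q : ℝ) (D : Fin 4 → X q →ₗ[ℂ] X q) : Prop :=
  (∀ μ, D μ 1 = 0) ∧
  (∀ μ ν, D μ (x q ν) = if μ = ν then 1 else 0) ∧
  (∀ μ ν, ∀ f : X q, D μ (x q ν * f) =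
    (if μ = ν then f else 0) + (q : ℂ) • ∑ σ : Fin 4, Lx q ν μ σ * D σ f)

/-- The upper-index coordinates `x⁰ = x₀`, `x⁻ = q⁻¹x₊`, `x⁺ = q x₋`, `x³ = -x₃`. -/
def xup (q : ℝ) : Fin 4 → X q := fun i =>
  match i with
  | 0 => x q 0
  | 1 => (q : ℂ)⁻¹ • x q 2
  | 2 => (q : ℂ) • x q 1
  | 3 => -x q 3

/-- The explicit 4×4 matrix `L₀` in the vector basis. -/
def LL0 (q : ℝ) : Matrix (Fin 4) (Fin 4) (X q) :=
  (qnum q 2)⁻¹ •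
  !![(qnum q 4 / qnum q 2) • x q 0, ((q : ℂ) * lam q) • x q 1, ((q : ℂ) * lam q) • x q 2,
       ((q : ℂ) * lam q) • x q 3;
     -((lam q / (q : ℂ) ^ 2) • x q 2),
       (qnum q 4 / qnum q 2) • x q 0 - (lam q ^ 2 / (q : ℂ)) • x q 3, 0, lam q • x q 2;
     lam q • x q 1, 0, (qnum q 4 / qnum q 2) • x q 0 - ((q : ℂ) * lam q ^ 2) • x q 3,
       -(lam q • x q 1);
     (lam q / (q : ℂ)) • x q 3, -(((q : ℂ) * lam q) • x q 1), (lam q / (q : ℂ)) • x q 2,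
       (qnum q 4 / qnum q 2) • x q 0 - lam q ^ 2 • x q 3]


lemma central_aux {R : Type*} [Ring R] [Algebra ℂ R] (u : ℂ) (hu : u ≠ 0)
    (a b c d : R)
    (h1 : b*a = a*b) (h2 : c*a = a*c) (h3 : d*a = a*d)
    (h4 : b*d = (u^2) • (d*b) - (u^2-1) • (a*b))
    (h5 : d*c = (u^2) • (c*d) - (u^2-1) • (a*c))
    (h6 : b*c = c*b + (u - u⁻¹) • (d*d) - (u - u⁻¹) • (a*d)) :
    ((a*a + u⁻¹ • (b*c) + u • (c*b) - d*d) * a = a * (a*a + u⁻¹ • (b*c) + u • (c*b) - d*d)) ∧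
    ((a*a + u⁻¹ • (b*c) + u • (c*b) - d*d) * b = b * (a*a + u⁻¹ • (b*c) + u • (c*b) - d*d)) ∧
    ((a*a + u⁻¹ • (b*c) + u • (c*b) - d*d) * c = c * (a*a + u⁻¹ • (b*c) + u • (c*b) - d*d)) ∧
    ((a*a + u⁻¹ • (b*c) + u • (c*b) - d*d) * d = d * (a*a + u⁻¹ • (b*c) + u • (c*b) - d*d)) := by
  have h1' : ∀ z : R, b*(a*z) = a*(b*z) := fun z => by rw [← mul_assoc, h1, mul_assoc]
  have h2' : ∀ z : R, c*(a*z) = a*(c*z) := fun z => by rw [← mul_assoc, h2, mul_assoc]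
  have h3' : ∀ z : R, d*(a*z) = a*(d*z) := fun z => by rw [← mul_assoc, h3, mul_assoc]
  have h4' : ∀ z : R, b*(d*z) = (u^2) • (d*(b*z)) - (u^2-1) • (a*(b*z)) := fun z => by
    rw [← mul_assoc, h4, sub_mul, smul_mul_assoc, smul_mul_assoc, mul_assoc, mul_assoc]
  have h5' : ∀ z : R, d*(c*z) = (u^2) • (c*(d*z)) - (u^2-1) • (a*(c*z)) := fun z => by
    rw [← mul_assoc, h5, sub_mul, smul_mul_assoc, smul_mul_assoc, mul_assoc, mul_assoc]
  have h6' : ∀ z : R, b*(c*z) = c*(b*z) + (u - u⁻¹) • (d*(d*z)) - (u - u⁻¹) • (a*(d*z)) := fun z => by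
    rw [← mul_assoc, h6, sub_mul, add_mul, smul_mul_assoc, smul_mul_assoc, mul_assoc, mul_assoc, mul_assoc]
  refine ⟨?_, ?_, ?_, ?_⟩ <;>
  · simp only [mul_add, add_mul, mul_sub, sub_mul, smul_add, smul_sub, smul_smul,
      smul_mul_assoc, mul_smul_comm, mul_assoc, h1, h2, h3, h4, h5, h6,
      h1', h2', h3', h4', h5', h6']
    all_goals (match_scalars <;> field_simp <;> ring)

/-- the four-square `x² = x₀² + q⁻¹x₋x₊ + q x₊x₋ - x₃²` is central
in quantum Minkowski space, i.e. it commutes with each of the four generators. -/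
theorem foursquare_central (q : ℝ) (hq : 0 < q) (hq1 : q ≠ 1) :
    ∀ i : Fin 4, xsq q * x q i = x q i * xsq q := by
  have hu : (q : ℂ) ≠ 0 := by
    exact_mod_cast hq.ne'
  have key : ∀ {f f' : F}, Rel q f f' →
      RingQuot.mkAlgHom ℂ (Rel q) f = RingQuot.mkAlgHom ℂ (Rel q) f' :=
    fun h => RingQuot.mkAlgHom_rel ℂ h
  have h1 : x q 1 * x q 0 = x q 0 * x q 1 := by
    simpa [x, _root_.map_mul] using key Rel.r10
  have h2 : x q 2 * x q 0 = x q 0 * x q 2 := by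
    simpa [x, _root_.map_mul] using key Rel.r20
  have h3 : x q 3 * x q 0 = x q 0 * x q 3 := by
    simpa [x, _root_.map_mul] using key Rel.r30
  have E4 : (q:ℂ)⁻¹ • (x q 1 * x q 3) - (q:ℂ) • (x q 3 * x q 1)
      = -(((q:ℂ) - (q:ℂ)⁻¹) • (x q 1 * x q 0)) := by
    simpa only [x, _root_.map_mul, _root_.map_sub, _root_.map_smul, _root_.map_neg] using key Rel.r13
  have E5 : (q:ℂ)⁻¹ • (x q 3 * x q 2) - (q:ℂ) • (x q 2 * x q 3)
      = -(((q:ℂ) - (q:ℂ)⁻¹) • (x q 2 * x q 0)) := by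
    simpa only [x, _root_.map_mul, _root_.map_sub, _root_.map_smul, _root_.map_neg] using key Rel.r32
  have E6 : x q 1 * x q 2 - x q 2 * x q 1 - ((q:ℂ) - (q:ℂ)⁻¹) • (x q 3 * x q 3)
      = -(((q:ℂ) - (q:ℂ)⁻¹) • (x q 3 * x q 0)) := by
    simpa only [x, _root_.map_mul, _root_.map_sub, _root_.map_smul, _root_.map_neg] using key Rel.rmp
  have h4 : x q 1 * x q 3 = ((q:ℂ)^2) • (x q 3 * x q 1) - ((q:ℂ)^2 - 1) • (x q 0 * x q 1) := by
    have h := congrArg (fun z : X q => (q:ℂ) • z) E4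
    simp only [smul_sub, smul_neg, smul_smul, h1] at h
    rw [mul_inv_cancel₀ hu, one_smul] at h
    have e2 : (q:ℂ) * ((q:ℂ) - (q:ℂ)⁻¹) = (q:ℂ)^2 - 1 := by field_simp
    have e1 : (q:ℂ) * (q:ℂ) = (q:ℂ)^2 := by ring
    rw [e1, e2] at h
    rw [sub_eq_iff_eq_add] at h
    rw [h]; abel
  have h5 : x q 3 * x q 2 = ((q:ℂ)^2) • (x q 2 * x q 3) - ((q:ℂ)^2 - 1) • (x q 0 * x q 2) := by
    have h := congrArg (fun z : X q => (q:ℂ) • z) E5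
    simp only [smul_sub, smul_neg, smul_smul, h2] at h
    rw [mul_inv_cancel₀ hu, one_smul] at h
    have e2 : (q:ℂ) * ((q:ℂ) - (q:ℂ)⁻¹) = (q:ℂ)^2 - 1 := by field_simp
    have e1 : (q:ℂ) * (q:ℂ) = (q:ℂ)^2 := by ring
    rw [e1, e2] at h
    rw [sub_eq_iff_eq_add] at h
    rw [h]; abel
  have h6 : x q 1 * x q 2 = x q 2 * x q 1 + ((q:ℂ) - (q:ℂ)⁻¹) • (x q 3 * x q 3)
      - ((q:ℂ) - (q:ℂ)⁻¹) • (x q 0 * x q 3) := by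
    rw [h3] at E6
    rw [sub_sub, sub_eq_iff_eq_add] at E6
    rw [E6]; abel
  obtain ⟨g0, g1, g2, g3⟩ :=
    central_aux (R := X q) (q:ℂ) hu (x q 0) (x q 1) (x q 2) (x q 3) h1 h2 h3 h4 h5 h6
  intro i
  fin_cases i <;> simp only [xsq] <;> [exact g0; exact g1; exact g2; exact g3]


end QMink
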